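/- arXiv:1301.1940 — 2 statements merged into one kernel-verified Lean document; each statement's English description precedes it below -/
import Mathlib

section
/- Assume ⟨α_i, α_j⟩ ≤ 0 for i ≠ j. Then the Langlands retraction 𝔏 : V → V⁺ is order-preserving: x ≤ y implies 𝔏(x) ≤ 𝔏(y), where ≤ is the order defined by the cone V^pos. -/
/-!
Write `d = 𝔏(y) - 𝔏(x) = ∑ aᵢ αᵢ`. Each `𝔏(z) - z` lies in `V^pos` (the variational
inequality tested against `𝔏(z) + ωᵢ`), and complementary slackness `⟪𝔏(x) - x, 𝔏(x)⟫ = 0` forces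
`⟪𝔏(x), αᵢ⟫ = 0` wherever the `αᵢ`-coordinate of `𝔏(x) - x` is positive. Hence wherever
`aᵢ < 0` we have `⟪d, αᵢ⟫ = ⟪𝔏(y), αᵢ⟫ ≥ 0`. For an obtuse basis this already forces
`d ∈ V^pos`: with `N = ∑ aᵢ⁻ αᵢ` and `P = ∑ aᵢ⁺ αᵢ`, obtuseness and disjoint supports give
`⟪P, N⟫ ≤ 0`, so `‖N‖² = ⟪P, N⟫ - ⟪d, N⟫ ≤ 0`.
-/

open scoped InnerProductSpace
open Finset

/-- The closed convex cone generated by a finite family of vectors: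
the set of non-negative linear combinations. -/
def coneGen {V : Type*} [AddCommGroup V] [Module ℝ V] {ι : Type*} [Fintype ι]
    (v : ι → V) : Set V :=
  {x | ∃ c : ι → ℝ, (∀ i, 0 ≤ c i) ∧ x = ∑ i, c i • v i}

/-- `y` is a point of `K` closest to `x`. -/
def IsClosestPoint {V : Type*} [NormedAddCommGroup V] (K : Set V) (x y : V) : Prop :=
  y ∈ K ∧ ∀ z ∈ K, dist x y ≤ dist x z

section ConeGen

variable {V ι : Type*} [AddCommGroup V] [Module ℝ V] [Fintype ι] {v : ι → V}

lemma zero_mem_coneGen (v : ι → V) : (0 : V) ∈ coneGen v :=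
  ⟨0, fun _ => le_rfl, by simp⟩

lemma add_mem_coneGen {x y : V} (hx : x ∈ coneGen v) (hy : y ∈ coneGen v) :
    x + y ∈ coneGen v := by
  obtain ⟨c, hc, rfl⟩ := hx
  obtain ⟨c', hc', rfl⟩ := hy
  exact ⟨c + c', fun i => add_nonneg (hc i) (hc' i), by simp [add_smul, sum_add_distrib]⟩

lemma smul_mem_coneGen {t : ℝ} {x : V} (ht : 0 ≤ t) (hx : x ∈ coneGen v) :
    t • x ∈ coneGen v := by
  obtain ⟨c, hc, rfl⟩ := hx
  exact ⟨fun i => t * c i, fun i => mul_nonneg ht (hc i), by simp [smul_sum, smul_smul]⟩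

lemma mem_coneGen_self (v : ι → V) (i : ι) : v i ∈ coneGen v := by
  classical
  exact ⟨Pi.single i 1, fun j => by by_cases h : j = i <;> simp [h], by simp⟩

lemma convex_coneGen (v : ι → V) : Convex ℝ (coneGen v) :=
  fun _ hx _ hy _ _ ha hb _ => add_mem_coneGen (smul_mem_coneGen ha hx) (smul_mem_coneGen hb hy)

lemma Module.Basis.mem_coneGen_iff (b : Module.Basis ι ℝ V) {w : V} :
    w ∈ coneGen b ↔ ∀ i, 0 ≤ b.repr w i := by
  classical
  constructor
  · rintro ⟨c, hc, rfl⟩ i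
    rw [b.repr_sum_self]
    exact hc i
  · exact fun h => ⟨fun i => b.repr w i, h, (b.sum_repr w).symm⟩

end ConeGen

namespace IsClosestPoint

variable {V ι : Type*} [NormedAddCommGroup V] [InnerProductSpace ℝ V] [Fintype ι]

lemma inner_sub_nonpos {K : Set V} (hK : Convex ℝ K) {x y : V} (h : IsClosestPoint K x y) :
    ∀ z ∈ K, ⟪x - y, z - y⟫_ℝ ≤ 0 := by
  have : Nonempty K := ⟨⟨y, h.1⟩⟩
  rw [← norm_eq_iInf_iff_real_inner_le_zero hK h.1]
  refine le_antisymm (le_ciInf fun z => by simpa [dist_eq_norm] using h.2 z z.2) ?_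
  exact ciInf_le ⟨0, by rintro r ⟨z, rfl⟩; exact norm_nonneg _⟩ (⟨y, h.1⟩ : K)

variable {v : ι → V} {x y : V}

lemma inner_generator_nonneg (h : IsClosestPoint (coneGen v) x y) (i : ι) :
    0 ≤ ⟪y - x, v i⟫_ℝ := by
  have := h.inner_sub_nonpos (convex_coneGen v) (y + v i)
    (add_mem_coneGen h.1 (mem_coneGen_self v i))
  rw [add_sub_cancel_left, ← neg_sub, inner_neg_left] at this
  linarith

lemma inner_sub_self_eq_zero (h : IsClosestPoint (coneGen v) x y) : ⟪y - x, y⟫_ℝ = 0 := by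
  have h₀ := h.inner_sub_nonpos (convex_coneGen v) 0 (zero_mem_coneGen v)
  have h₂ := h.inner_sub_nonpos (convex_coneGen v) ((2 : ℝ) • y)
    (smul_mem_coneGen zero_le_two h.1)
  rw [two_smul, add_sub_cancel_right, ← neg_sub, inner_neg_left] at h₂
  rw [zero_sub, inner_neg_right, ← neg_sub, inner_neg_left, neg_neg] at h₀
  linarith

lemma coeff_mul_inner_eq_zero (h : IsClosestPoint (coneGen v) x y) {c : ι → ℝ}
    (hc : ∀ i, 0 ≤ c i) (hy : y = ∑ i, c i • v i) (i : ι) : c i * ⟪y - x, v i⟫_ℝ = 0 := by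
  have hsum : ∑ j, c j * ⟪y - x, v j⟫_ℝ = 0 :=
    calc _ = ⟪y - x, ∑ j, c j • v j⟫_ℝ := by simp only [inner_sum, real_inner_smul_right]
      _ = 0 := by rw [← hy]; exact h.inner_sub_self_eq_zero
  exact (sum_eq_zero_iff_of_nonneg fun j _ =>
    mul_nonneg (hc j) (h.inner_generator_nonneg j)).1 hsum i (mem_univ i)

end IsClosestPoint

section DualBasis

variable {V ι : Type*} [NormedAddCommGroup V] [InnerProductSpace ℝ V] [Fintype ι]
  [DecidableEq ι] {b : Module.Basis ι ℝ V} {ω : ι → V}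

lemma inner_dual_eq_repr (hω : ∀ i j, ⟪ω i, b j⟫_ℝ = if i = j then 1 else 0) (w : V)
    (i : ι) : ⟪w, ω i⟫_ℝ = b.repr w i := by
  rw [real_inner_comm]
  conv_lhs => rw [← b.sum_repr w]
  simp only [inner_sum, real_inner_smul_right, hω]
  simp

lemma inner_sum_smul_dual (hω : ∀ i j, ⟪ω i, b j⟫_ℝ = if i = j then 1 else 0) (c : ι → ℝ)
    (i : ι) : ⟪∑ j, c j • ω j, b i⟫_ℝ = c i := by
  simp [sum_inner, real_inner_smul_left, hω]

end DualBasis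

section Obtuse

variable {V ι : Type*} [NormedAddCommGroup V] [InnerProductSpace ℝ V] [Fintype ι]

lemma inner_sum_posPart_sum_negPart_nonpos {v : ι → V}
    (hobtuse : ∀ i j, i ≠ j → ⟪v i, v j⟫_ℝ ≤ 0) (a : ι → ℝ) :
    ⟪∑ i, (a i)⁺ • v i, ∑ j, (a j)⁻ • v j⟫_ℝ ≤ 0 := by
  simp only [sum_inner, inner_sum, real_inner_smul_left, real_inner_smul_right]
  refine sum_nonpos fun j _ => sum_nonpos fun i _ => ?_
  by_cases hij : i = j
  · subst hij
    rcases le_total (a i) 0 with ha | ha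
    · simp [posPart_eq_zero.2 ha]
    · simp [negPart_eq_zero.2 ha]
  · exact mul_nonpos_of_nonneg_of_nonpos (negPart_nonneg _)
      (mul_nonpos_of_nonneg_of_nonpos (posPart_nonneg _) (hobtuse i j hij))

lemma Module.Basis.mem_coneGen_of_obtuse (b : Module.Basis ι ℝ V)
    (hobtuse : ∀ i j, i ≠ j → ⟪b i, b j⟫_ℝ ≤ 0) {d : V}
    (hd : ∀ i, b.repr d i < 0 → 0 ≤ ⟪d, b i⟫_ℝ) : d ∈ coneGen b := by
  classical
  set a := b.repr d
  set N := ∑ j, (a j)⁻ • b j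
  have hdN : 0 ≤ ⟪d, N⟫_ℝ := by
    simp only [N, inner_sum, real_inner_smul_right]
    refine sum_nonneg fun j _ => ?_
    rcases le_or_gt 0 (a j) with ha | ha
    · simp [negPart_eq_zero.2 ha]
    · exact mul_nonneg (negPart_nonneg _) (hd j ha)
  have hPN := inner_sum_posPart_sum_negPart_nonpos hobtuse a
  have hd_split : d = ∑ i, (a i)⁺ • b i - N := by
    conv_lhs => rw [← b.sum_repr d]
    simp only [N, ← sum_sub_distrib, ← sub_smul, posPart_sub_negPart, a]
  have hN : N = 0 := by
    rw [← inner_self_eq_zero (𝕜 := ℝ)]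
    refine le_antisymm ?_ real_inner_self_nonneg
    have : ⟪N, N⟫_ℝ = ⟪∑ i, (a i)⁺ • b i, N⟫_ℝ - ⟪d, N⟫_ℝ := by
      rw [← inner_sub_left, hd_split, sub_sub_cancel]
    linarith
  refine b.mem_coneGen_iff.2 fun i => negPart_eq_zero.1 ?_
  have := congrArg (fun w => b.repr w i) hN
  simpa only [N, b.repr_sum_self, map_zero, Finsupp.coe_zero, Pi.zero_apply] using this

end Obtuse

theorem langlands_retraction_monotone_general
    {V ι : Type*} [NormedAddCommGroup V] [InnerProductSpace ℝ V]
    [Fintype ι] [DecidableEq ι] (b : Module.Basis ι ℝ V) (ω : ι → V)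
    (hω : ∀ i j, ⟪ω i, b j⟫_ℝ = if i = j then 1 else 0)
    (hobtuse : ∀ i j, i ≠ j → ⟪(b i : V), b j⟫_ℝ ≤ 0)
    (x y Lx Ly : V) (hxy : y - x ∈ coneGen (⇑b))
    (hLx : IsClosestPoint (coneGen ω) x Lx) (hLy : IsClosestPoint (coneGen ω) y Ly) :
    Ly - Lx ∈ coneGen (⇑b) := by
  obtain ⟨c, hc, hLx_eq⟩ := hLx.1
  obtain ⟨c', hc', hLy_eq⟩ := hLy.1
  refine b.mem_coneGen_of_obtuse hobtuse fun i hi => ?_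
  have hsplit :
      b.repr (Ly - Lx) i = b.repr (y - x) i + b.repr (Ly - y) i - b.repr (Lx - x) i := by
    simp only [map_sub, Finsupp.sub_apply]; ring
  have hx_pos : 0 < b.repr (Lx - x) i := by
    have hLy_coord := hLy.inner_generator_nonneg i
    rw [inner_dual_eq_repr hω] at hLy_coord
    linarith [b.mem_coneGen_iff.1 hxy i]
  have hLx_b : ⟪Lx, b i⟫_ℝ = 0 := by
    have hslack := hLx.coeff_mul_inner_eq_zero hc hLx_eq i
    rw [inner_dual_eq_repr hω] at hslack
    rw [hLx_eq, inner_sum_smul_dual hω]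
    exact (mul_eq_zero.1 hslack).resolve_right hx_pos.ne'
  rw [inner_sub_left, hLx_b, sub_zero, hLy_eq, inner_sum_smul_dual hω]
  exact hc' i

/-- For an obtuse basis, the Langlands retraction `𝔏` is order-preserving:
`x ≤ y` implies `𝔏(x) ≤ 𝔏(y)` for the order defined by the cone `V^pos`. -/
theorem langlands_retraction_monotone
    {V ι : Type*} [NormedAddCommGroup V] [InnerProductSpace ℝ V] [FiniteDimensional ℝ V]
    [Fintype ι] [DecidableEq ι] (b : Module.Basis ι ℝ V) (ω : ι → V)
    (hω : ∀ i j, ⟪ω i, b j⟫_ℝ = if i = j then 1 else 0)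
    (hobtuse : ∀ i j, i ≠ j → ⟪(b i : V), b j⟫_ℝ ≤ 0)
    (x y Lx Ly : V) (hxy : y - x ∈ coneGen (⇑b))
    (hLx : IsClosestPoint (coneGen ω) x Lx) (hLy : IsClosestPoint (coneGen ω) y Ly) :
    Ly - Lx ∈ coneGen (⇑b) :=
  langlands_retraction_monotone_general b ω hω hobtuse x y Lx Ly hxy hLx hLy
end

section
/- Assume ⟨α_i, α_j⟩ ≤ 0 for i ≠ j. If (x_t) is a nonempty family of vectors in V⁺ and y is their coordinatewise infimum with respect to expansion in the basis {α_i} (which exists since each coordinate of each x_t is ≥ 0), then y ∈ V⁺. -/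
/-!
For an obtuse basis, `⟪x, α i⟫ ≥ 0` for all `i` forces the coordinates of `x` to be nonnegative:
splitting `x = x⁺ - x⁻` along the coordinates, `‖x⁻‖² = ⟪x⁺, x⁻⟫ - ⟪x, x⁻⟫ ≤ 0`. So the
coordinatewise infimum `m` exists. Since `x t - y` has nonnegative coordinates, obtuseness gives
`0 ≤ ⟪x t, α i⟫ ≤ ⟪y, α i⟫ + (c t i - m i) ‖α i‖²`, i.e. `c t i ≥ m i - ⟪y, α i⟫ / ‖α i‖²` for
every `t`; taking the infimum over `t` yields `⟪y, α i⟫ ≥ 0`.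
-/

open scoped InnerProductSpace
open Finset

section ObtuseFamily

variable {V ι : Type*} [NormedAddCommGroup V] [InnerProductSpace ℝ V] [Fintype ι] {v : ι → V}

theorem inner_sum_smul_sum_smul_nonpos (hv : Pairwise fun i j => ⟪v i, v j⟫_ℝ ≤ 0)
    {p n : ι → ℝ} (hp : ∀ i, 0 ≤ p i) (hn : ∀ i, 0 ≤ n i) (hpn : ∀ i, p i * n i = 0) :
    ⟪∑ j, p j • v j, ∑ k, n k • v k⟫_ℝ ≤ 0 := by
  rw [sum_inner]
  refine sum_nonpos fun j _ => ?_
  rw [inner_sum]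
  refine sum_nonpos fun k _ => ?_
  rw [real_inner_smul_left, real_inner_smul_right, ← mul_assoc]
  rcases eq_or_ne j k with rfl | hjk
  · simp [hpn j]
  · exact mul_nonpos_of_nonneg_of_nonpos (mul_nonneg (hp j) (hn k)) (hv hjk)

theorem inner_sum_smul_le_of_pairwise (hv : Pairwise fun i j => ⟪v i, v j⟫_ℝ ≤ 0)
    {a : ι → ℝ} (ha : ∀ j, 0 ≤ a j) (i : ι) :
    ⟪∑ j, a j • v j, v i⟫_ℝ ≤ a i * ⟪v i, v i⟫_ℝ := by
  classical
  rw [sum_inner, ← add_sum_erase _ _ (mem_univ i)]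
  simp only [real_inner_smul_left]
  have hrest : ∑ j ∈ univ.erase i, a j * ⟪v j, v i⟫_ℝ ≤ 0 :=
    sum_nonpos fun j hj => mul_nonpos_of_nonneg_of_nonpos (ha j) (hv (ne_of_mem_erase hj))
  linarith

theorem nonneg_of_inner_sum_smul_nonneg (hv : Pairwise fun i j => ⟪v i, v j⟫_ℝ ≤ 0)
    (hli : LinearIndependent ℝ v) {d : ι → ℝ} (hd : ∀ i, 0 ≤ ⟪∑ j, d j • v j, v i⟫_ℝ)
    (j : ι) : 0 ≤ d j := by
  set z := ∑ k, (d k)⁻ • v k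
  have hsplit : ∑ k, d k • v k = ∑ k, (d k)⁺ • v k - z := by
    simp only [z, ← sum_sub_distrib, ← sub_smul, posPart_sub_negPart]
  have hz : ⟪z, z⟫_ℝ ≤ 0 :=
    calc ⟪z, z⟫_ℝ = ⟪∑ k, (d k)⁺ • v k, z⟫_ℝ - ⟪∑ k, d k • v k, z⟫_ℝ := by
          rw [hsplit, inner_sub_left]; ring
      _ ≤ 0 - 0 := by
          refine sub_le_sub (inner_sum_smul_sum_smul_nonpos hv (fun k => posPart_nonneg _)
            (fun k => negPart_nonneg _) (fun k => ?_)) ?_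
          · rcases le_total (d k) 0 with h | h <;> simp [h]
          · rw [inner_sum]
            exact sum_nonneg fun k _ => by
              rw [real_inner_smul_right]; exact mul_nonneg (negPart_nonneg _) (hd k)
      _ = 0 := sub_zero 0
  have hneg : (d j)⁻ = 0 :=
    Fintype.linearIndependent_iff.mp hli _ (real_inner_self_nonpos.mp hz) j
  exact negPart_eq_zero.mp hneg

theorem inner_sum_iInf_smul_nonneg {T : Type*} [Nonempty T]
    (hv : Pairwise fun i j => ⟪v i, v j⟫_ℝ ≤ 0) (hv₀ : ∀ i, v i ≠ 0) {c : T → ι → ℝ}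
    (hbdd : ∀ j, BddBelow (Set.range fun t => c t j))
    (hc : ∀ t i, 0 ≤ ⟪∑ j, c t j • v j, v i⟫_ℝ) (i : ι) :
    0 ≤ ⟪∑ j, (⨅ t, c t j) • v j, v i⟫_ℝ := by
  set m := fun j => ⨅ t, c t j
  set y := ∑ j, m j • v j
  have hN : 0 < ⟪v i, v i⟫_ℝ := real_inner_self_pos.mpr (hv₀ i)
  have hlower : ∀ t, m i - ⟪y, v i⟫_ℝ / ⟪v i, v i⟫_ℝ ≤ c t i := by
    intro t
    have hdecomp : ∑ j, c t j • v j = y + ∑ j, (c t j - m j) • v j := by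
      simp only [y, ← sum_add_distrib, ← add_smul, add_sub_cancel]
    have hexcess := inner_sum_smul_le_of_pairwise hv
      (fun j => sub_nonneg.mpr (ciInf_le (hbdd j) t)) i
    have hct := hc t i
    rw [hdecomp, inner_add_left] at hct
    rw [sub_le_comm, le_div_iff₀ hN]
    linarith
  have hinf : m i - ⟪y, v i⟫_ℝ / ⟪v i, v i⟫_ℝ ≤ m i := le_ciInf hlower
  have hquot : 0 ≤ ⟪y, v i⟫_ℝ / ⟪v i, v i⟫_ℝ := by linarith
  rwa [le_div_iff₀ hN, zero_mul] at hquot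

end ObtuseFamily

theorem infimum_mem_dominant_general
    {V ι : Type*} [NormedAddCommGroup V] [InnerProductSpace ℝ V]
    [Fintype ι] (b : Module.Basis ι ℝ V)
    (hobtuse : ∀ i j, i ≠ j → ⟪(b i : V), b j⟫_ℝ ≤ 0)
    {T : Type*} [Nonempty T] (c : T → ι → ℝ)
    (hmem : ∀ t, ∀ i, 0 ≤ ⟪∑ j, c t j • (b j : V), (b i : V)⟫_ℝ) :
    ∀ i, 0 ≤ ⟪∑ j, (⨅ t, c t j) • (b j : V), (b i : V)⟫_ℝ := by
  have hcoord_nonneg : ∀ t j, 0 ≤ c t j := fun t =>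
    nonneg_of_inner_sum_smul_nonneg hobtuse b.linearIndependent (hmem t)
  exact inner_sum_iInf_smul_nonneg hobtuse b.ne_zero
    (fun j => ⟨0, by rintro _ ⟨t, rfl⟩; exact hcoord_nonneg t j⟩) hmem

/-- For an obtuse basis, if `(x t)` is a nonempty family in
`V⁺ = {v | ∀ i, ⟪v, α i⟫ ≥ 0}` with basis coordinates `c t`, then the coordinatewise
infimum `∑ i, (⨅ t, c t i) • α i` again lies in `V⁺`. -/
theorem infimum_mem_dominant
    {V ι : Type*} [NormedAddCommGroup V] [InnerProductSpace ℝ V] [FiniteDimensional ℝ V]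
    [Fintype ι] (b : Module.Basis ι ℝ V)
    (hobtuse : ∀ i j, i ≠ j → ⟪(b i : V), b j⟫_ℝ ≤ 0)
    {T : Type*} [Nonempty T] (c : T → ι → ℝ)
    (hmem : ∀ t, ∀ i, 0 ≤ ⟪∑ j, c t j • (b j : V), (b i : V)⟫_ℝ) :
    ∀ i, 0 ≤ ⟪∑ j, (⨅ t, c t j) • (b j : V), (b i : V)⟫_ℝ :=
  infimum_mem_dominant_general b hobtuse c hmem
end
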